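/- arXiv:1207.3462 — 2 statements merged into one kernel-verified Lean document; each statement's English description precedes it below -/
import Mathlib

section
/- In a finite semiorder, if two bad elements lie on the same level then they are equivalent (i.e., they are comparable to exactly the same elements in the same direction), and no two adjacent levels both contain bad elements. -/
namespace Paper

/-- Two elements are incomparable. -/
def Incomp {α : Type*} [PartialOrder α] (a b : α) : Prop := ¬ a ≤ b ∧ ¬ b ≤ a

/-- A semiorder: no induced `2+2` and no induced `3+1`. -/
def IsSemiorder (α : Type*) [PartialOrder α] : Prop :=
  (¬ ∃ x y z w : α, y < x ∧ w < z ∧ Incomp x z ∧ Incomp x w ∧ Incomp y z ∧ Incomp y w) ∧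
  (¬ ∃ x y z w : α, z < y ∧ y < x ∧ Incomp x w ∧ Incomp y w ∧ Incomp z w)

/-- There is a chain of `k` elements. -/
def HasChain (α : Type*) [Preorder α] (k : ℕ) : Prop := ∃ c : Fin k → α, StrictMono c

/-- The length of a longest chain (number of edges) is exactly `H`. -/
def HasLength (α : Type*) [Preorder α] (H : ℕ) : Prop :=
  HasChain α (H + 1) ∧ ¬ HasChain α (H + 2)

/-- There is a chain of `k` elements all strictly above `a`. -/
def HasChainAbove {α : Type*} [Preorder α] (a : α) (k : ℕ) : Prop :=
  ∃ c : Fin k → α, StrictMono c ∧ ∀ j, a < c j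

/-- `a` is on the `i`-th level (`i ≥ 1`). -/
def OnLevel {α : Type*} [Preorder α] (a : α) (i : ℕ) : Prop :=
  1 ≤ i ∧ HasChainAbove a (i - 1) ∧ ¬ HasChainAbove a i

/-- Number of isomorphism classes of partial orders on `Fin n` satisfying `pred`. -/
noncomputable def countPosets (n : ℕ) (pred : PartialOrder (Fin n) → Prop) : ℕ :=
  Nat.card (Quot (fun (P Q : {P : PartialOrder (Fin n) // pred P}) =>
    ∃ e : Fin n ≃ Fin n, ∀ a b : Fin n,
      (@LE.le _ P.1.toPreorder.toLE a b ↔ @LE.le _ Q.1.toPreorder.toLE (e a) (e b))))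

/-- Semiorder of length exactly `H`. -/
def SemiLen (n H : ℕ) (P : PartialOrder (Fin n)) : Prop :=
  @IsSemiorder (Fin n) P ∧ @HasLength (Fin n) P.toPreorder H

/-- Semiorder of length at most `h`. -/
def SemiLenLe (n h : ℕ) (P : PartialOrder (Fin n)) : Prop :=
  @IsSemiorder (Fin n) P ∧ ¬ @HasChain (Fin n) P.toPreorder (h + 2)

/-- `f_H^n`. -/
noncomputable def fEx (H n : ℕ) : ℕ := countPosets n (SemiLen n H)

/-- `f_{≤h}^n`. -/
noncomputable def fLe (h n : ℕ) : ℕ := countPosets n (SemiLenLe n h)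

/-- Ordered (plane) trees. -/
inductive PTree where
  | node : List PTree → PTree

def PTree.size : PTree → ℕ
  | .node cs => 1 + (cs.attach.map fun c => PTree.size c.1).sum
decreasing_by have := List.sizeOf_lt_of_mem c.2; simp only [PTree.node.sizeOf_spec] at *; omega

def PTree.height : PTree → ℕ
  | .node cs => (cs.attach.map fun c => PTree.height c.1 + 1).foldr max 0
decreasing_by have := List.sizeOf_lt_of_mem c.2; simp only [PTree.node.sizeOf_spec] at *; omega

def PTree.countDepth : PTree → ℕ → ℕ
  | .node _, 0 => 1
  | .node cs, d + 1 => (cs.attach.map fun c => PTree.countDepth c.1 d).sum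
termination_by t _ => sizeOf t
decreasing_by have := List.sizeOf_lt_of_mem c.2; simp only [PTree.node.sizeOf_spec] at *; omega

/-- Value of a path after the steps in `l` (`true` = up-step, `false` = down-step). -/
def pathVal (l : List Bool) : ℤ := (l.map fun b => if b then (1 : ℤ) else -1).sum

/-- `l` is a Dyck path. -/
def IsDyckPath (l : List Bool) : Prop :=
  pathVal l = 0 ∧ ∀ p, p <+: l → 0 ≤ pathVal p

/-- The height of the path `l` is exactly `H`. -/
def DyckHeightIs (l : List Bool) (H : ℕ) : Prop :=
  (∃ p, p <+: l ∧ pathVal p = H) ∧ ∀ p, p <+: l → pathVal p ≤ (H : ℤ)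

/-- Number of peaks of a path. -/
def peaks (l : List Bool) : ℕ :=
  ((List.range l.length).filter fun i => l.getD i false && !(l.getD (i + 1) true)).length


/-- A bad element of a semiorder. -/
def IsBad {α : Type*} [PartialOrder α] (x : α) : Prop :=
  ∀ i, OnLevel x i →
    ((i = 1 ∨ ∀ b, OnLevel b (i - 1) → x < b) ∧
     ((∃ H, HasLength α H ∧ i = H + 1) ∨ ∀ b, OnLevel b (i + 1) → ¬ b < x))

/-- Two elements are equivalent: comparable with exactly the same elements in the
same direction. -/
def EquivElems {α : Type*} [PartialOrder α] (p p' : α) : Prop :=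
  ∀ q : α, (p' < q ↔ p < q) ∧ (q < p' ↔ q < p)

/-!
Levels decrease strictly along `<`, and above an element of level `i` there is a chain meeting
every level `m < i`. In a semiorder this forces elements two or more levels apart to be
comparable: if `x` on level `i ≥ j + 2` were not below `q` on level `j`, a chain `x < u < v` with
`u, v` on levels `j + 1, j` would form a `3+1` with `q`. Hence elements of one level can differ
only in how they compare with the two adjacent levels, which is exactly what badness fixes. And a
bad element on level `i + 1` lies below all of level `i`, which badness on level `i` forbids.
-/

section Levels

variable {α : Type*} [Preorder α] {a b : α} {i j k m : ℕ}

lemma HasChainAbove.mono (h : HasChainAbove a k) (hjk : j ≤ k) : HasChainAbove a j := by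
  obtain ⟨c, hc, ha⟩ := h
  exact ⟨c ∘ Fin.castLE hjk, hc.comp (Fin.strictMono_castLE hjk), fun _ => ha _⟩

lemma HasChainAbove.of_lt (hab : a < b) (h : HasChainAbove b k) : HasChainAbove a (k + 1) := by
  obtain ⟨c, hc, hb⟩ := h
  exact ⟨Fin.cons b c, Fin.strictMono_cons.2 ⟨hb, hc⟩,
    Fin.cases hab fun j => hab.trans (hb j)⟩

lemma HasChainAbove.hasChain (h : HasChainAbove a k) : HasChain α (k + 1) := by
  obtain ⟨c, hc, ha⟩ := h
  exact ⟨Fin.cons a c, Fin.strictMono_cons.2 ⟨ha, hc⟩⟩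

lemma hasChainAbove_zero (a : α) : HasChainAbove a 0 :=
  ⟨Fin.elim0, fun j => j.elim0, fun j => j.elim0⟩

lemma OnLevel.hasChain (h : OnLevel a i) : HasChain α i := by
  simpa [Nat.sub_add_cancel h.1] using h.2.1.hasChain

lemma OnLevel.level_lt_of_lt (hab : a < b) (ha : OnLevel a i) (hb : OnLevel b j) : j < i := by
  by_contra! hij
  have := hb.2.1.of_lt hab
  exact ha.2.2 (this.mono (by have := hb.1; omega))

lemma OnLevel.unique (hi : OnLevel a i) (hj : OnLevel a j) : i = j := by
  by_contra h
  rcases Nat.lt_or_gt_of_ne h with hlt | hlt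
  · exact hi.2.2 (hj.2.1.mono (by omega))
  · exact hj.2.2 (hi.2.1.mono (by omega))

lemma OnLevel.ne (ha : OnLevel a i) (hb : OnLevel b j) (hij : i ≠ j) : a ≠ b := by
  rintro rfl
  exact hij (ha.unique hb)

lemma exists_onLevel [Finite α] (a : α) : ∃ i, OnLevel a i := by
  classical
  have hex : ∃ k, ¬ HasChainAbove a k := by
    refine ⟨Nat.card α + 1, fun ⟨c, hc, _⟩ => ?_⟩
    simpa using Nat.card_le_card_of_injective c hc.injective
  have hpos : 0 < Nat.find hex := Nat.pos_of_ne_zero fun h =>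
    (h ▸ Nat.find_spec hex) (hasChainAbove_zero a)
  exact ⟨Nat.find hex, hpos, not_not.1 (Nat.find_min hex (by omega)), Nat.find_spec hex⟩

lemma OnLevel.exists_gt_onLevel_pred [Finite α] (ha : OnLevel a (i + 2)) :
    ∃ b, a < b ∧ OnLevel b (i + 1) := by
  obtain ⟨c, hc, hac⟩ : HasChainAbove a (i + 1) := ha.2.1
  obtain ⟨j, hb⟩ := exists_onLevel (c 0)
  have htail : HasChainAbove (c 0) i :=
    ⟨c ∘ Fin.succ, hc.comp (Fin.strictMono_succ), fun j => hc (Fin.succ_pos j)⟩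
  have hji : j < i + 2 := ha.level_lt_of_lt (hac 0) hb
  have hij : i < j := by
    by_contra! hle
    exact hb.2.2 (htail.mono hle)
  exact ⟨c 0, hac 0, by rwa [show j = i + 1 by omega] at hb⟩

lemma OnLevel.exists_gt_onLevel [Finite α] (ha : OnLevel a i) (hm : 1 ≤ m) (hmi : m < i) :
    ∃ b, a < b ∧ OnLevel b m := by
  induction i generalizing a with
  | zero => omega
  | succ n ih =>
    obtain ⟨n, rfl⟩ : ∃ n', n = n' + 1 := ⟨n - 1, by omega⟩
    obtain ⟨b, hab, hb⟩ := ha.exists_gt_onLevel_pred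
    rcases eq_or_lt_of_le (Nat.le_of_lt_succ hmi) with rfl | hlt
    · exact ⟨b, hab, hb⟩
    · obtain ⟨b', hbb', hb'⟩ := ih hb hlt
      exact ⟨b', hab.trans hbb', hb'⟩

end Levels

section Semiorder

variable {α : Type*} [PartialOrder α] {x y q : α} {i j : ℕ}

lemma incomp_of_not_lt (hne : x ≠ y) (hxy : ¬ x < y) (hyx : ¬ y < x) : Incomp x y :=
  ⟨fun h => hxy (h.lt_of_ne hne), fun h => hyx (h.lt_of_ne hne.symm)⟩

lemma IsSemiorder.lt_of_onLevel [Finite α] (hsemi : IsSemiorder α) (hx : OnLevel x i)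
    (hq : OnLevel q j) (hji : j + 2 ≤ i) : x < q := by
  by_contra hxq
  obtain ⟨u, hxu, hu⟩ := hx.exists_gt_onLevel (m := j + 1) (by omega) (by omega)
  obtain ⟨v, huv, hv⟩ := hu.exists_gt_onLevel hq.1 (by omega)
  refine hsemi.2 ⟨v, u, x, q, hxu, huv, ?_, ?_, ?_⟩
  · refine incomp_of_not_lt ?_ (fun hvq => hxq ((hxu.trans huv).trans hvq))
      (fun hqv => (hq.level_lt_of_lt hqv hv).false)
    rintro rfl
    exact hxq (hxu.trans huv)
  · refine incomp_of_not_lt (hu.ne hq (by omega)) (fun huq => hxq (hxu.trans huq)) fun hqu => ?_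
    have := hq.level_lt_of_lt hqu hu
    omega
  · refine incomp_of_not_lt (hx.ne hq (by omega)) hxq fun hqx => ?_
    have := hq.level_lt_of_lt hqx hx
    omega

end Semiorder

namespace IsBad

variable {α : Type*} [PartialOrder α] {x y b q : α} {i : ℕ}

lemma lt_of_onLevel_pred (hx : IsBad x) (hxi : OnLevel x (i + 1)) (hb : OnLevel b i) : x < b := by
  rcases (hx (i + 1) hxi).1 with hi | hall
  · exact absurd hb.1 (by omega)
  · exact hall b hb

lemma not_lt_of_onLevel_succ (hx : IsBad x) (hxi : OnLevel x i) (hb : OnLevel b (i + 1)) :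
    ¬ b < x := by
  rcases (hx i hxi).2 with ⟨H, hH, rfl⟩ | hall
  · exact fun _ => hH.2 hb.hasChain
  · exact hall b hb

lemma lt_of_lt_of_onLevel [Finite α] (hsemi : IsSemiorder α) (hx : IsBad x)
    (hxi : OnLevel x i) (hyi : OnLevel y i) (hyq : y < q) : x < q := by
  obtain ⟨j, hq⟩ := exists_onLevel q
  rcases eq_or_lt_of_le (Nat.succ_le_of_lt (hyi.level_lt_of_lt hyq hq)) with rfl | hlt
  · exact hx.lt_of_onLevel_pred hxi hq
  · exact hsemi.lt_of_onLevel hxi hq hlt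

lemma gt_of_gt_of_onLevel [Finite α] (hsemi : IsSemiorder α) (hy : IsBad y)
    (hxi : OnLevel x i) (hyi : OnLevel y i) (hqy : q < y) : q < x := by
  obtain ⟨j, hq⟩ := exists_onLevel q
  rcases eq_or_lt_of_le (Nat.succ_le_of_lt (hq.level_lt_of_lt hqy hyi)) with rfl | hlt
  · exact absurd hqy (hy.not_lt_of_onLevel_succ hyi hq)
  · exact hsemi.lt_of_onLevel hq hxi hlt

end IsBad

theorem statement9 {α : Type*} [Fintype α] [PartialOrder α] (hsemi : IsSemiorder α) :
    (∀ (x y : α) (i : ℕ), IsBad x → IsBad y → OnLevel x i → OnLevel y i → EquivElems x y) ∧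
    (∀ (x y : α) (i : ℕ), IsBad x → IsBad y → OnLevel x i → ¬ OnLevel y (i + 1)) := by
  refine ⟨fun x y i hx hy hxi hyi q => ⟨⟨?_, ?_⟩, ?_, ?_⟩, fun x y i hx hy hxi hyi => ?_⟩
  · exact hx.lt_of_lt_of_onLevel hsemi hxi hyi
  · exact hy.lt_of_lt_of_onLevel hsemi hyi hxi
  · exact hy.gt_of_gt_of_onLevel hsemi hxi hyi
  · exact hx.gt_of_gt_of_onLevel hsemi hyi hxi
  · exact hx.not_lt_of_onLevel_succ hxi hyi (hy.lt_of_onLevel_pred hyi hxi)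

end Paper
end

section
/- Every n-element semiorder is determined up to isomorphism by the vector (r_1,...,r_n) where r_i is the number of elements strictly below the i-th element, listed in weakly decreasing order; this vector satisfies r_1 ≥ r_2 ≥ ... ≥ r_n ≥ 0 and r_i ≤ n−i for all i. Conversely, every such vector arises from a semiorder. -/
namespace Paper

/-- The number of elements strictly below `x` in the poset `P`. -/
noncomputable def downDeg {n : ℕ} (P : PartialOrder (Fin n)) (x : Fin n) : ℕ :=
  Nat.card {y : Fin n // @LT.lt _ P.toPreorder.toLT y x}

/-- The multiset of down-degrees of the poset `P`. -/
noncomputable def degMultiset {n : ℕ} (P : PartialOrder (Fin n)) : Multiset ℕ :=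
  Finset.univ.val.map (downDeg P)

/-!
In a semiorder the strict up-sets `Ioi x` form a chain (no `2+2`), and a strictly larger up-set
comes with a smaller down-set (no `3+1`). Listing the elements by increasing up-set, ties broken
by decreasing down-degree, the down-degrees `r_i` decrease and the elements below the `j`-th one
are exactly the last `r_j` ones. Hence the semiorder is determined by `r`, irreflexivity gives
`r_i ≤ n - 1 - i`, and conversely for every such `r` the rule "`i < j` iff `n - r_j ≤ i`" defines
a semiorder with down-degrees `r`.
-/

section Semiorder

open Set

variable {α : Type*} [PartialOrder α]

theorem IsSemiorder.Ioi_subset_or_subset (h : IsSemiorder α) (a b : α) :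
    Ioi a ⊆ Ioi b ∨ Ioi b ⊆ Ioi a := by
  by_contra! hc
  obtain ⟨⟨p, hap, hbp⟩, ⟨q, hbq, haq⟩⟩ := And.imp not_subset.mp not_subset.mp hc
  rw [mem_Ioi] at hap hbp hbq haq
  exact h.1 ⟨p, a, q, b, hap, hbq, ⟨by order, by order⟩, ⟨by order, by order⟩,
    ⟨by order, by order⟩, ⟨by order, by order⟩⟩

theorem IsSemiorder.Iio_subset_of_Ioi_ssubset (h : IsSemiorder α) {a b : α}
    (hab : Ioi a ⊂ Ioi b) : Iio b ⊆ Iio a := by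
  intro w hwb
  by_contra hwa
  obtain ⟨z, hbz, haz⟩ := exists_of_ssubset hab
  have hne : a ≠ b := by rintro rfl; exact hab.ne rfl
  rw [mem_Iio] at hwb hwa
  rw [mem_Ioi] at hbz haz
  exact h.2 ⟨z, b, w, a, hwb, hbz, ⟨by order, by order⟩, ⟨by order, by order⟩,
    ⟨by order, by order⟩⟩

/-- Sorting by `|Ioi x| - |Iio x|` thus orders the up-sets by inclusion and the down-degrees
decreasingly. -/
theorem IsSemiorder.Ioi_subset_and_ncard_Iio_le [Finite α] (h : IsSemiorder α) {a b : α}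
    (hab : ((Ioi a).ncard : ℤ) - (Iio a).ncard ≤ (Ioi b).ncard - (Iio b).ncard) :
    Ioi a ⊆ Ioi b ∧ (Iio b).ncard ≤ (Iio a).ncard := by
  obtain heq | hne := eq_or_ne (Ioi a) (Ioi b)
  · rw [heq] at hab ⊢
    exact ⟨subset_rfl, by omega⟩
  obtain hsub | hsub := h.Ioi_subset_or_subset a b
  · exact ⟨hsub, ncard_le_ncard (h.Iio_subset_of_Ioi_ssubset (hsub.ssubset_of_ne hne))⟩
  · have hlt := hsub.ssubset_of_ne hne.symm
    have := ncard_lt_ncard hlt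
    have := ncard_le_ncard (h.Iio_subset_of_Ioi_ssubset hlt)
    omega

end Semiorder

theorem Fin.sub_card_le_iff_mem_of_isUpperSet {N : ℕ} {S : Finset (Fin N)}
    (hS : IsUpperSet (S : Set (Fin N))) (i : Fin N) : N - S.card ≤ i ↔ i ∈ S := by
  constructor
  · intro hi
    by_contra hiS
    have : S ⊆ Finset.Ioi i := fun j hj =>
      Finset.mem_Ioi.mpr (lt_of_not_ge fun hji => hiS (hS hji hj))
    have := Finset.card_le_card this
    rw [Fin.card_Ioi] at this
    omega
  · intro hi
    have := Finset.card_le_card fun j hj => hS (Finset.mem_Ici.mp hj) hi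
    rw [Fin.card_Ici] at this
    omega

theorem IsSemiorder.exists_equiv_fin {α : Type*} [PartialOrder α] [Finite α]
    (h : IsSemiorder α) {N : ℕ} (hN : Nat.card α = N) :
    ∃ σ : Fin N ≃ α, Antitone (fun i => (Set.Iio (σ i)).ncard) ∧
      ∀ i b, σ i < b ↔ N - (Set.Iio b).ncard ≤ i := by
  classical
  let key : α → ℤ := fun x => (Set.Ioi x).ncard - (Set.Iio x).ncard
  let e := (Finite.equivFinOfCardEq hN).symm
  let σ : Fin N ≃ α := (Tuple.sort (key ∘ e)).trans e
  have hσ : ∀ ⦃i j⦄, i ≤ j → Set.Ioi (σ i) ⊆ Set.Ioi (σ j) ∧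
      (Set.Iio (σ j)).ncard ≤ (Set.Iio (σ i)).ncard := fun i j hij =>
    h.Ioi_subset_and_ncard_Iio_le (Tuple.monotone_sort (key ∘ e) hij)
  refine ⟨σ, fun i j hij => (hσ hij).2, fun i b => ?_⟩
  let S : Finset (Fin N) := Finset.univ.filter (σ · < b)
  have hS : IsUpperSet (S : Set (Fin N)) := fun i j hij hi => by
    simpa [S] using (hσ hij).1 (by simpa [S] using hi)
  have hcard : S.card = (Set.Iio b).ncard := by
    rw [← Nat.card_coe_set_eq, ← Fintype.card_subtype, ← Nat.card_eq_fintype_card]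
    exact Nat.card_congr (σ.subtypeEquiv fun _ => Iff.rfl)
  rw [← hcard, Fin.sub_card_le_iff_mem_of_isUpperSet hS]
  simp [S]

theorem Fin.natCard_subtype_le_val (n c : ℕ) : Nat.card {y : Fin n // c ≤ (y : ℕ)} = n - c := by
  classical
  simp_rw [← not_lt]
  rw [Nat.card_eq_fintype_card, Fintype.card_subtype_compl, Fintype.card_fin,
    Fintype.card_subtype, Fin.card_filter_val_lt]
  omega

section Threshold

variable {n : ℕ} (t : Fin n → ℕ) (ht : ∀ b : Fin n, (b : ℕ) < t b)

abbrev thresholdOrder : PartialOrder (Fin n) :=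
  @partialOrderOfSO (Fin n) (fun a b => t b ≤ a)
    { irrefl a h := (ht a).not_ge h
      trans _ b _ hab hbc := hbc.trans ((ht b).le.trans hab) }

variable {t ht}

theorem thresholdOrder_lt_iff {a b : Fin n} :
    @LT.lt _ (thresholdOrder t ht).toLT a b ↔ t b ≤ a := Iff.rfl

theorem thresholdOrder_not_le {a b : Fin n} (h : ¬ @LE.le _ (thresholdOrder t ht).toLE a b) :
    (a : ℕ) < t b :=
  not_le.mp fun hle => h (Or.inr hle)

theorem isSemiorder_thresholdOrder (hmono : Monotone t) :
    @IsSemiorder (Fin n) (thresholdOrder t ht) := by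
  constructor
  · rintro ⟨x, y, z, w, hyx, hwz, -, ⟨-, hwx⟩, ⟨hyz, -⟩, -⟩
    rw [thresholdOrder_lt_iff] at hyx hwz
    have := thresholdOrder_not_le hyz
    have := thresholdOrder_not_le hwx
    omega
  · rintro ⟨x, y, z, w, hzy, hyx, ⟨-, hwx⟩, -, ⟨hzw, -⟩⟩
    rw [thresholdOrder_lt_iff] at hzy hyx
    have := thresholdOrder_not_le hwx
    have : t w ≤ t y := hmono (Fin.le_def.mpr (by omega))
    exact hzw (Or.inr (by omega))

theorem downDeg_thresholdOrder (b : Fin n) : downDeg (thresholdOrder t ht) b = n - t b :=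
  Fin.natCard_subtype_le_val n (t b)

end Threshold

theorem eq_of_antitone_of_map_univ_val_eq {n : ℕ} {f g : Fin n → ℕ} (hf : Antitone f)
    (hg : Antitone g) (h : Finset.univ.val.map f = Finset.univ.val.map g) : f = g := by
  rw [Fin.univ_val_map, Fin.univ_val_map, Multiset.coe_eq_coe] at h
  exact List.ofFn_injective (h.eq_of_sortedGE hf.sortedGE_ofFn hg.sortedGE_ofFn)

theorem degMultiset_eq_map_comp {n : ℕ} (P : PartialOrder (Fin n)) (σ : Fin n ≃ Fin n) :
    degMultiset P = Finset.univ.val.map (downDeg P ∘ σ) := by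
  rw [degMultiset, ← Multiset.map_map, Multiset.map_univ_val_equiv]

theorem exists_perm_downDeg_antitone {n : ℕ} (P : PartialOrder (Fin n))
    (hP : @IsSemiorder (Fin n) P) :
    ∃ σ : Fin n ≃ Fin n, (∀ i j : Fin n, i ≤ j → downDeg P (σ j) ≤ downDeg P (σ i)) ∧
      (∀ i, downDeg P (σ i) ≤ n - 1 - i) ∧
      ∀ i j, (@LE.le _ P.toLE (σ i) (σ j) ↔ i = j ∨ n - downDeg P (σ j) ≤ i) := by
  obtain ⟨σ, hanti, hlt⟩ := @IsSemiorder.exists_equiv_fin (Fin n) P _ hP n (Nat.card_fin n)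
  replace hlt : ∀ i b, @LT.lt _ P.toLT (σ i) b ↔ n - downDeg P b ≤ i := hlt
  refine ⟨σ, fun i j hij => hanti hij, fun i => ?_, fun i j => ?_⟩
  · have := (hlt i (σ i)).not.mp (@lt_irrefl _ P.toPreorder _)
    omega
  · rw [@le_iff_eq_or_lt _ P, σ.injective.eq_iff]
    exact or_congr_right (hlt i (σ j))

theorem statement19 (n : ℕ) :
    (∀ P Q : PartialOrder (Fin n), @IsSemiorder (Fin n) P → @IsSemiorder (Fin n) Q →
      degMultiset P = degMultiset Q →
      ∃ e : Fin n ≃ Fin n, ∀ a b : Fin n,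
        (@LE.le _ P.toPreorder.toLE a b ↔ @LE.le _ Q.toPreorder.toLE (e a) (e b))) ∧
    (∀ P : PartialOrder (Fin n), @IsSemiorder (Fin n) P →
      ∀ r : Fin n → ℕ, (∀ i j : Fin n, i ≤ j → r j ≤ r i) →
      degMultiset P = Finset.univ.val.map r →
      ∀ i : Fin n, r i ≤ n - 1 - i.val) ∧
    (∀ r : Fin n → ℕ, (∀ i j : Fin n, i ≤ j → r j ≤ r i) →
      (∀ i : Fin n, r i ≤ n - 1 - i.val) →
      ∃ P : PartialOrder (Fin n), @IsSemiorder (Fin n) P ∧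
        degMultiset P = Finset.univ.val.map r) := by
  refine ⟨fun P Q hP hQ hPQ => ?_, fun P hP r hr hPr i => ?_, fun r hr hbound => ?_⟩
  · obtain ⟨σ, hσ, -, hPle⟩ := exists_perm_downDeg_antitone P hP
    obtain ⟨τ, hτ, -, hQle⟩ := exists_perm_downDeg_antitone Q hQ
    have hdeg : downDeg P ∘ σ = downDeg Q ∘ τ := eq_of_antitone_of_map_univ_val_eq hσ hτ <| by
      rw [← degMultiset_eq_map_comp, ← degMultiset_eq_map_comp, hPQ]
    refine ⟨σ.symm.trans τ, fun a b => ?_⟩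
    obtain ⟨i, rfl⟩ := σ.surjective a
    obtain ⟨j, rfl⟩ := σ.surjective b
    simp only [Equiv.trans_apply, Equiv.symm_apply_apply, hPle, hQle]
    have hj : downDeg P (σ j) = downDeg Q (τ j) := congrFun hdeg j
    rw [hj]
  · obtain ⟨σ, hσ, hbound, -⟩ := exists_perm_downDeg_antitone P hP
    have hrσ : r = downDeg P ∘ σ := eq_of_antitone_of_map_univ_val_eq hr hσ <| by
      rw [← hPr, degMultiset_eq_map_comp]
    exact hrσ ▸ hbound i
  · have ht (i : Fin n) : (i : ℕ) < n - r i := by have := hbound i; omega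
    refine ⟨thresholdOrder (fun i => n - r i) ht,
      isSemiorder_thresholdOrder fun i j hij => Nat.sub_le_sub_left (hr i j hij) n,
      Multiset.map_congr rfl fun b _ => ?_⟩
    rw [downDeg_thresholdOrder]
    have := hbound b
    omega

end Paper
end
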